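/- Let τ_H be a finite set of HI-tasks and n ≥ 1 the number of transition windows; for each i ∈ τ_H let T_i > 0 and 0 < C_i^L ≤ C_i^H be reals with u_i^L = C_i^L/T_i and u_i^H = C_i^H/T_i, let 0 < θ_i^L and 0 < θ_i^H be rates, let w_1, …, w_n ≥ 0 be window durations, and suppose the transition rates satisfy θ_{i,j}^H = θ_i^H for all i ∈ τ_H and all 1 ≤ j ≤ n. Set D_i = T_i − C_i^L/θ_i^L, suppose D_i > 0, and let k_i ∈ {1, …, n+1} be an earliest completion window for D_i for each i, with R_i = θ_{i,k_i}^H if k_i ≤ n and R_i = θ_i^H otherwise. Then the conjunction over all i ∈ τ_H of the HI-task conditions of Theorems 1 and 2 of the multi-rate test — Σ_{j<k_i} θ_{i,j}^H·w_j + R_i·(D_i − W_{k_i−1}) ≥ C_i^H − C_i^L; θ_{i,j}^H ≥ θ_i^L for k_i ≤ j ≤ n; θ_i^H ≥ θ_i^L; Σ_{j<k_i} θ_{i,j}^H·w_j ≥ u_i^H·W_{k_i−1}; θ_{i,j}^H ≤ θ_{i,j+1}^H for 1 ≤ j < k_i with j+1 ≤ n; θ_{i,j}^H ≥ u_i^H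 for k_i ≤ j ≤ n; θ_i^H ≥ u_i^H — holds if and only if for every i ∈ τ_H: u_i^L/θ_i^L + (u_i^H − u_i^L)/θ_i^H ≤ 1 and θ_i^L ≤ θ_i^H. -/

import Mathlib

/-- Total duration of the first `p` windows: `W_p = w_1 + ⋯ + w_p` (with `W_0 = 0`). -/
noncomputable def Wsum (w : ℕ → ℝ) (p : ℕ) : ℝ := ∑ j ∈ Finset.Icc 1 p, w j

/-- `k ∈ {1, …, n+1}` is an earliest completion window for `D` if `W_{k-1} < D`
and, in case `k ≤ n`, also `W_k ≥ D`. -/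
def ECW (n : ℕ) (w : ℕ → ℝ) (D : ℝ) (k : ℕ) : Prop :=
  1 ≤ k ∧ k ≤ n + 1 ∧ Wsum w (k - 1) < D ∧ (k ≤ n → D ≤ Wsum w k)

/-!
With every transition rate equal to `θ_H`, the work done by the end of the earliest completion
window telescopes to `θ_H · D`, so the demand condition reads `C^H − C^L ≤ θ_H (T − C^L/θ_L)`,
which after division by `T θ_H` is the dual-rate utilisation bound. The remaining multi-rate
conditions collapse to `θ_L ≤ θ_H` and `u^H ≤ θ_H`, and the latter follows from the former two
because `C^L/θ_L ≥ C^L/θ_H`.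
-/

theorem Wsum_nonneg {w : ℕ → ℝ} {p : ℕ} (hw : ∀ j, 1 ≤ j → j ≤ p → 0 ≤ w j) :
    0 ≤ Wsum w p :=
  Finset.sum_nonneg fun j hj => hw j (Finset.mem_Icc.1 hj).1 (Finset.mem_Icc.1 hj).2

theorem sum_mul_eq_mul_Wsum {w θ : ℕ → ℝ} {c : ℝ} {p : ℕ}
    (hθ : ∀ j, 1 ≤ j → j ≤ p → θ j = c) :
    ∑ j ∈ Finset.Icc 1 p, θ j * w j = c * Wsum w p := by
  rw [Wsum, Finset.mul_sum]
  refine Finset.sum_congr rfl fun j hj => ?_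
  rw [hθ j (Finset.mem_Icc.1 hj).1 (Finset.mem_Icc.1 hj).2]

theorem dualRate_iff_demand_le {T CL CH θL θH : ℝ} (hT : 0 < T) (hθL : 0 < θL) (hθH : 0 < θH) :
    CL / T / θL + (CH / T - CL / T) / θH ≤ 1 ↔ CH - CL ≤ θH * (T - CL / θL) := by
  have hlhs : CL / T / θL + (CH / T - CL / T) / θH
      = (θH * (CL / θL) + (CH - CL)) / (T * θH) := by
    field_simp
  rw [hlhs, div_le_one (by positivity)]
  constructor <;> intro h <;> linarith

theorem div_le_of_demand_le {T CL CH θL θH : ℝ} (hT : 0 < T) (hCL : 0 ≤ CL) (hθL : 0 < θL)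
    (hθLH : θL ≤ θH) (hdemand : CH - CL ≤ θH * (T - CL / θL)) :
    CH / T ≤ θH := by
  have hCL_le : CL ≤ θH * (CL / θL) := by
    rw [mul_div_assoc', le_div_iff₀ hθL, mul_comm θH]
    exact mul_le_mul_of_nonneg_left hθLH hCL
  rw [div_le_iff₀ hT]
  linarith

section ConstantRates

variable {n k : ℕ} {w θt : ℕ → ℝ} {θL θH uH D CL CH R : ℝ}

theorem multiRate_conditions_iff_of_const_rate
    (hw : ∀ j, 1 ≤ j → j ≤ n → 0 ≤ w j) (hθt : ∀ j, 1 ≤ j → j ≤ n → θt j = θH)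
    (hk : ECW n w D k) (hR : R = if k ≤ n then θt k else θH) :
    ((CH - CL ≤ ∑ j ∈ Finset.Icc 1 (k - 1), θt j * w j + R * (D - Wsum w (k - 1))) ∧
      (∀ j, k ≤ j → j ≤ n → θL ≤ θt j) ∧
      (θL ≤ θH) ∧
      (uH * Wsum w (k - 1) ≤ ∑ j ∈ Finset.Icc 1 (k - 1), θt j * w j) ∧
      (∀ j, 1 ≤ j → j < k → j + 1 ≤ n → θt j ≤ θt (j + 1)) ∧
      (∀ j, k ≤ j → j ≤ n → uH ≤ θt j) ∧
      (uH ≤ θH)) ↔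
    CH - CL ≤ θH * D ∧ θL ≤ θH ∧ uH ≤ θH := by
  obtain ⟨hk1, hkn, -, -⟩ := hk
  have hsum : ∑ j ∈ Finset.Icc 1 (k - 1), θt j * w j = θH * Wsum w (k - 1) :=
    sum_mul_eq_mul_Wsum fun j hj1 hj2 => hθt j hj1 (by omega)
  have hRθ : R = θH := by
    rw [hR]
    split_ifs with hk
    exacts [hθt k hk1 hk, rfl]
  have hW : 0 ≤ Wsum w (k - 1) := Wsum_nonneg fun j hj1 hj2 => hw j hj1 (by omega)
  rw [hsum, hRθ, mul_sub, add_sub_cancel]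
  constructor
  · rintro ⟨hdemand, -, hθLH, -, -, -, huH⟩
    exact ⟨hdemand, hθLH, huH⟩
  · rintro ⟨hdemand, hθLH, huH⟩
    refine ⟨hdemand, fun j hkj hjn => ?_, hθLH, mul_le_mul_of_nonneg_right huH hW,
      fun j hj1 _ hjn => ?_, fun j hkj hjn => ?_, huH⟩
    · rwa [hθt j (by omega) hjn]
    · rw [hθt j hj1 (by omega), hθt (j + 1) (by omega) hjn]
    · rwa [hθt j (by omega) hjn]

end ConstantRates

theorem stmt11_general {ι : Type*} (τH : Finset ι) (n : ℕ)
    (T CL CH : ι → ℝ)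
    (hT : ∀ i ∈ τH, 0 < T i) (hCL : ∀ i ∈ τH, 0 < CL i)
    (uL uH : ι → ℝ)
    (huL : ∀ i ∈ τH, uL i = CL i / T i) (huH : ∀ i ∈ τH, uH i = CH i / T i)
    (θL θHI : ι → ℝ)
    (hθL : ∀ i ∈ τH, 0 < θL i) (hθHI : ∀ i ∈ τH, 0 < θHI i)
    (w : ℕ → ℝ) (hw : ∀ j, 1 ≤ j → j ≤ n → 0 ≤ w j)
    (θt : ι → ℕ → ℝ) (hθt : ∀ i ∈ τH, ∀ j, 1 ≤ j → j ≤ n → θt i j = θHI i)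
    (D : ι → ℝ) (hD : ∀ i ∈ τH, D i = T i - CL i / θL i)
    (k : ι → ℕ) (hk : ∀ i ∈ τH, ECW n w (D i) (k i))
    (R : ι → ℝ) (hR : ∀ i ∈ τH, R i = if k i ≤ n then θt i (k i) else θHI i) :
    (∀ i ∈ τH,
      (CH i - CL i ≤
        ∑ j ∈ Finset.Icc 1 (k i - 1), θt i j * w j + R i * (D i - Wsum w (k i - 1))) ∧
      (∀ j, k i ≤ j → j ≤ n → θL i ≤ θt i j) ∧
      (θL i ≤ θHI i) ∧
      (uH i * Wsum w (k i - 1) ≤ ∑ j ∈ Finset.Icc 1 (k i - 1), θt i j * w j) ∧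
      (∀ j, 1 ≤ j → j < k i → j + 1 ≤ n → θt i j ≤ θt i (j + 1)) ∧
      (∀ j, k i ≤ j → j ≤ n → uH i ≤ θt i j) ∧
      (uH i ≤ θHI i)) ↔
    (∀ i ∈ τH, uL i / θL i + (uH i - uL i) / θHI i ≤ 1 ∧ θL i ≤ θHI i) := by
  refine forall₂_congr fun i hi => ?_
  rw [multiRate_conditions_iff_of_const_rate hw (hθt i hi) (hk i hi) (hR i hi),
    huL i hi, huH i hi, hD i hi, dualRate_iff_demand_le (hT i hi) (hθL i hi) (hθHI i hi)]
  exact ⟨fun ⟨hdemand, hθLH, _⟩ => ⟨hdemand, hθLH⟩, fun ⟨hdemand, hθLH⟩ =>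
    ⟨hdemand, hθLH, div_le_of_demand_le (hT i hi) (hCL i hi).le (hθL i hi) hθLH hdemand⟩⟩

/-- **Lemma 2** (dual-rate generalization), restricted to the HI-task conditions:
if every transition rate `θt i j` of each HI-task equals its stable HI-mode rate
`θHI i`, then the HI-task conditions of Theorems 1 and 2 of the multi-rate test hold
for all HI-tasks iff the dual-rate conditions
`u_i^L/θ_i^L + (u_i^H − u_i^L)/θ_i^H ≤ 1` and `θ_i^L ≤ θ_i^H` hold for all HI-tasks. -/
theorem stmt11 {ι : Type*} (τH : Finset ι) (n : ℕ) (hn : 1 ≤ n)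
    (T CL CH : ι → ℝ)
    (hT : ∀ i ∈ τH, 0 < T i) (hCL : ∀ i ∈ τH, 0 < CL i) (hCLH : ∀ i ∈ τH, CL i ≤ CH i)
    (uL uH : ι → ℝ)
    (huL : ∀ i ∈ τH, uL i = CL i / T i) (huH : ∀ i ∈ τH, uH i = CH i / T i)
    (θL θHI : ι → ℝ)
    (hθL : ∀ i ∈ τH, 0 < θL i) (hθHI : ∀ i ∈ τH, 0 < θHI i)
    (w : ℕ → ℝ) (hw : ∀ j, 1 ≤ j → j ≤ n → 0 ≤ w j)
    (θt : ι → ℕ → ℝ) (hθt : ∀ i ∈ τH, ∀ j, 1 ≤ j → j ≤ n → θt i j = θHI i)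
    (D : ι → ℝ) (hD : ∀ i ∈ τH, D i = T i - CL i / θL i) (hDpos : ∀ i ∈ τH, 0 < D i)
    (k : ι → ℕ) (hk : ∀ i ∈ τH, ECW n w (D i) (k i))
    (R : ι → ℝ) (hR : ∀ i ∈ τH, R i = if k i ≤ n then θt i (k i) else θHI i) :
    (∀ i ∈ τH,
      (CH i - CL i ≤
        ∑ j ∈ Finset.Icc 1 (k i - 1), θt i j * w j + R i * (D i - Wsum w (k i - 1))) ∧
      (∀ j, k i ≤ j → j ≤ n → θL i ≤ θt i j) ∧
      (θL i ≤ θHI i) ∧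
      (uH i * Wsum w (k i - 1) ≤ ∑ j ∈ Finset.Icc 1 (k i - 1), θt i j * w j) ∧
      (∀ j, 1 ≤ j → j < k i → j + 1 ≤ n → θt i j ≤ θt i (j + 1)) ∧
      (∀ j, k i ≤ j → j ≤ n → uH i ≤ θt i j) ∧
      (uH i ≤ θHI i)) ↔
    (∀ i ∈ τH, uL i / θL i + (uH i - uL i) / θHI i ≤ 1 ∧ θL i ≤ θHI i) :=
  stmt11_general τH n T CL CH hT hCL uL uH huL huH θL θHI hθL hθHI w hw θt hθt D hD k hk R hR
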